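/- arXiv:1607.08709 — 3 statements merged into one kernel-verified Lean document; each statement's English description precedes it below -/
import Mathlib

section
/- Let L : (0,1] → ℝ be positive, bounded, continuous on (0,1] and differentiable on (0,1). For d > 0 set g_d(s) := d^s·L(s), and assume that for every d > 0, every s̄ ∈ (0,1) with g_d'(s̄) = 0 is a point of strict local maximum of g_d (i.e. there is δ > 0 such that g_d(s) < g_d(s̄) whenever 0 < |s − s̄| < δ). Then: (i) for every d > 0, g_d' vanishes at most at one point of (0,1), and either g_d is monotone on (0,1] or there is exactly one s* ∈ (0,1) with g_d'(s*) = 0, in which case g_d is nondecreasing on (0,s*] and nonincreasing on [s*,1]; (ii) the limit L_0 := lim_{s→0^+} L(s) exists; (iii) for every d > 0, inf_{s∈(0,1]} g_d(s) = min(d·L(1), L_0); in particular the infimum equals d·L(1) when 0 < d ≤ d* and equals L_0 when d ≥ d*, where d* := L_0/L(1). (This is the abstract structure underlying the conclusion of Theorem 1.2: with L(s) = λ_1(m,1,s) and λ_1(m,d,s) = d^s L(s), once every interior critical point of s ↦ λ_1(m,d,s) is a strict local maximum, the infimum over s ∈ (0,1] is attained either at s = 1 or in the limit s → 0^+, according to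 whether d ≤ d* or d ≥ d*.) -/
/-!
A differentiable function on an interval all of whose critical points are strict local maxima
has at most one critical point: between two of them its minimum would be a third critical point,
which cannot be a strict local maximum. By Darboux's theorem the derivative keeps its sign away
from that point, so `g_d(s) = d ^ s * L s` increases and then decreases on `(0, 1]`. For `d = 1`
this makes `L` monotone near `0`, hence convergent there since it is bounded, and the infimum of
a function that increases and then decreases on `(0, 1]` is the smaller of its limit at `0` and
its value at `1`.
-/

open Set Filter Topology

lemma hasDerivAt_const_rpow_mul {L : ℝ → ℝ} {l d s : ℝ} (hd : 0 < d) (hL : HasDerivAt L l s) :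
    HasDerivAt (fun s => d ^ s * L s) (d ^ s * (Real.log d * L s + l)) s :=
  ((Real.hasStrictDerivAt_const_rpow hd s).hasDerivAt.mul hL).congr_deriv (by ring)

lemma eventually_nhdsNE_of_forall_abs_sub_lt {p : ℝ → Prop} {U : Set ℝ} {x : ℝ} (hU : U ∈ 𝓝 x)
    (h : ∃ δ > 0, ∀ y ∈ U, y ≠ x → |y - x| < δ → p y) : ∀ᶠ y in 𝓝[≠] x, p y := by
  obtain ⟨δ, hδ, h⟩ := h
  rw [eventually_nhdsWithin_iff]
  filter_upwards [hU, Metric.ball_mem_nhds x hδ] with y hyU hyδ hyx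
  exact h y hyU hyx (by rwa [Metric.mem_ball, Real.dist_eq] at hyδ)

lemma Filter.Eventually.exists_mem_Ioo_right_of_nhdsNE {p : ℝ → Prop} {x b : ℝ}
    (h : ∀ᶠ y in 𝓝[≠] x, p y) (hxb : x < b) : ∃ y ∈ Ioo x b, p y :=
  let ⟨y, hy, hp⟩ := ((h.filter_mono (nhdsGT_le_nhdsNE x)).and (Ioo_mem_nhdsGT hxb)).exists
  ⟨y, hp, hy⟩

lemma Filter.Eventually.exists_mem_Ioo_left_of_nhdsNE {p : ℝ → Prop} {a x : ℝ}
    (h : ∀ᶠ y in 𝓝[≠] x, p y) (hax : a < x) : ∃ y ∈ Ioo a x, p y :=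
  let ⟨y, hy, hp⟩ := ((h.filter_mono (nhdsLT_le_nhdsNE x)).and (Ioo_mem_nhdsLT hax)).exists
  ⟨y, hp, hy⟩

section CriticalPoints

variable {g G : ℝ → ℝ} {a b : ℝ}

lemma subsingleton_critical_of_strict_max (hg : ∀ x ∈ Ioo a b, HasDerivAt g (G x) x)
    (hmax : ∀ x ∈ Ioo a b, G x = 0 → ∀ᶠ y in 𝓝[≠] x, g y < g x) :
    {x ∈ Ioo a b | G x = 0}.Subsingleton := by
  intro s₁ h₁ s₂ h₂
  by_contra hne
  wlog hlt : s₁ < s₂ generalizing s₁ s₂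
  · exact this h₂ h₁ (Ne.symm hne) (lt_of_le_of_ne (not_lt.1 hlt) (Ne.symm hne))
  have hsub : Icc s₁ s₂ ⊆ Ioo a b := Icc_subset_Ioo h₁.1.1 h₂.1.2
  obtain ⟨t, ht, hmin⟩ := isCompact_Icc.exists_isMinOn (nonempty_Icc.2 hlt.le)
    fun x hx => (hg x (hsub hx)).continuousAt.continuousWithinAt
  have hGt : G t = 0 := by
    rcases ht.1.eq_or_lt with rfl | h₁t
    · exact h₁.2
    rcases ht.2.eq_or_lt with rfl | ht₂
    · exact h₂.2
    exact (hmin.isLocalMin (Icc_mem_nhds h₁t ht₂)).hasDerivAt_eq_zero (hg t (hsub ht))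
  have hbelow : ∃ y ∈ Icc s₁ s₂, g y < g t := by
    rcases ht.2.lt_or_eq with ht₂ | rfl
    · obtain ⟨y, hy, hgy⟩ := (hmax t (hsub ht) hGt).exists_mem_Ioo_right_of_nhdsNE ht₂
      exact ⟨y, ⟨ht.1.trans hy.1.le, hy.2.le⟩, hgy⟩
    · obtain ⟨y, hy, hgy⟩ := (hmax t (hsub ht) hGt).exists_mem_Ioo_left_of_nhdsNE hlt
      exact ⟨y, Ioo_subset_Icc_self hy, hgy⟩
  obtain ⟨y, hy, hgy⟩ := hbelow
  exact (isMinOn_iff.1 hmin y hy).not_gt hgy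

lemma monotoneOn_or_antitoneOn_of_hasDerivAt_ne_zero {D : Set ℝ} (hD : Convex ℝ D)
    (hgc : ContinuousOn g D) (hg : ∀ x ∈ interior D, HasDerivAt g (G x) x)
    (hG : ∀ x ∈ interior D, G x ≠ 0) : MonotoneOn g D ∨ AntitoneOn g D := by
  have hg' : ∀ x ∈ interior D, HasDerivWithinAt g (G x) (interior D) x :=
    fun x hx => (hg x hx).hasDerivWithinAt
  rcases hasDerivWithinAt_forall_lt_or_forall_gt_of_forall_ne hD.interior hg' hG with hneg | hpos
  · exact .inr (antitoneOn_of_hasDerivWithinAt_nonpos hD hgc hg' fun x hx => (hneg x hx).le)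
  · exact .inl (monotoneOn_of_hasDerivWithinAt_nonneg hD hgc hg' fun x hx => (hpos x hx).le)

lemma critical_structure_of_strict_max (hgc : ContinuousOn g (Ioc a b))
    (hg : ∀ x ∈ Ioo a b, HasDerivAt g (G x) x)
    (hmax : ∀ x ∈ Ioo a b, G x = 0 → ∀ᶠ y in 𝓝[≠] x, g y < g x) :
    (∀ s₁ ∈ Ioo a b, ∀ s₂ ∈ Ioo a b, G s₁ = 0 → G s₂ = 0 → s₁ = s₂) ∧
    ((MonotoneOn g (Ioc a b) ∨ AntitoneOn g (Ioc a b)) ∨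
      ∃ c ∈ Ioo a b, G c = 0 ∧ MonotoneOn g (Ioc a c) ∧ AntitoneOn g (Icc c b)) := by
  have huniq := subsingleton_critical_of_strict_max hg hmax
  refine ⟨fun s₁ h₁ s₂ h₂ hG₁ hG₂ => huniq ⟨h₁, hG₁⟩ ⟨h₂, hG₂⟩, ?_⟩
  by_cases hcrit : ∃ c ∈ Ioo a b, G c = 0
  · obtain ⟨c, hc, hGc⟩ := hcrit
    have hGne : ∀ x ∈ Ioo a b, x ≠ c → G x ≠ 0 :=
      fun x hx hxc hGx => hxc (huniq ⟨hx, hGx⟩ ⟨hc, hGc⟩)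
    have hleft : ∀ x ∈ interior (Ioc a c), x ∈ Ioo a b ∧ x ≠ c := fun x hx => by
      rw [interior_Ioc] at hx
      exact ⟨Ioo_subset_Ioo_right hc.2.le hx, hx.2.ne⟩
    have hright : ∀ x ∈ interior (Icc c b), x ∈ Ioo a b ∧ x ≠ c := fun x hx => by
      rw [interior_Icc] at hx
      exact ⟨Ioo_subset_Ioo_left hc.1.le hx, hx.1.ne'⟩
    have hmono : MonotoneOn g (Ioc a c) := by
      rcases monotoneOn_or_antitoneOn_of_hasDerivAt_ne_zero (convex_Ioc a c)
        (hgc.mono (Ioc_subset_Ioc_right hc.2.le)) (fun x hx => hg x (hleft x hx).1)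
        (fun x hx => hGne x (hleft x hx).1 (hleft x hx).2) with hm | ha
      · exact hm
      obtain ⟨y, hy, hgy⟩ := (hmax c hc hGc).exists_mem_Ioo_left_of_nhdsNE hc.1
      exact absurd (ha (Ioo_subset_Ioc_self hy) (right_mem_Ioc.2 hc.1) hy.2.le) hgy.not_ge
    have hanti : AntitoneOn g (Icc c b) := by
      rcases monotoneOn_or_antitoneOn_of_hasDerivAt_ne_zero (convex_Icc c b)
        (hgc.mono (Icc_subset_Ioc_iff hc.2.le |>.2 ⟨hc.1, le_rfl⟩))
        (fun x hx => hg x (hright x hx).1)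
        (fun x hx => hGne x (hright x hx).1 (hright x hx).2) with hm | ha
      · obtain ⟨y, hy, hgy⟩ := (hmax c hc hGc).exists_mem_Ioo_right_of_nhdsNE hc.2
        exact absurd (hm (left_mem_Icc.2 hc.2.le) (Ioo_subset_Icc_self hy) hy.1.le) hgy.not_ge
      · exact ha
    exact .inr ⟨c, hc, hGc, hmono, hanti⟩
  · push Not at hcrit
    rw [← interior_Ioc] at hg hcrit
    exact .inl (monotoneOn_or_antitoneOn_of_hasDerivAt_ne_zero (convex_Ioc a b) hgc hg hcrit)

end CriticalPoints

section Unimodal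

def IsUnimodalOn (g : ℝ → ℝ) (a b : ℝ) : Prop :=
  (MonotoneOn g (Ioc a b) ∨ AntitoneOn g (Ioc a b)) ∨
    ∃ c ∈ Ioo a b, MonotoneOn g (Ioc a c) ∧ AntitoneOn g (Icc c b)

variable {g : ℝ → ℝ} {a b l : ℝ}

lemma IsUnimodalOn.exists_tendsto_nhdsGT (hg : IsUnimodalOn g a b) (hab : a < b)
    (hbdd : BddBelow (g '' Ioc a b)) (hbdd' : BddAbove (g '' Ioc a b)) :
    ∃ l, Tendsto g (𝓝[>] a) (𝓝 l) := by
  rcases hg with (hm | ha) | ⟨c, hc, hm, -⟩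
  · exact ⟨_, hm.mono Ioo_subset_Ioc_self |>.tendsto_nhdsWithin_Ioo_right (nonempty_Ioo.2 hab)
      (hbdd.mono (image_mono Ioo_subset_Ioc_self))⟩
  · exact ⟨_, ha.mono Ioo_subset_Ioc_self |>.tendsto_nhdsWithin_Ioo_right (nonempty_Ioo.2 hab)
      (hbdd'.mono (image_mono Ioo_subset_Ioc_self))⟩
  · exact ⟨_, hm.mono Ioo_subset_Ioc_self |>.tendsto_nhdsWithin_Ioo_right (nonempty_Ioo.2 hc.1)
      (hbdd.mono (image_mono (Ioo_subset_Ioc_self.trans (Ioc_subset_Ioc_right hc.2.le))))⟩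

lemma MonotoneOn.ge_of_tendsto_nhdsGT {c s : ℝ} (hg : MonotoneOn g (Ioc a c))
    (hl : Tendsto g (𝓝[>] a) (𝓝 l)) (hs : s ∈ Ioc a c) : l ≤ g s :=
  le_of_tendsto hl <| by
    filter_upwards [Ioo_mem_nhdsGT hs.1] with t ht
    exact hg ⟨ht.1, ht.2.le.trans hs.2⟩ hs ht.2.le

lemma IsUnimodalOn.isGLB_image (hg : IsUnimodalOn g a b) (hab : a < b)
    (hl : Tendsto g (𝓝[>] a) (𝓝 l)) : IsGLB (g '' Ioc a b) (min (g b) l) := by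
  have hb : b ∈ Ioc a b := right_mem_Ioc.2 hab
  refine ⟨?_, fun m hm => le_min (hm (mem_image_of_mem g hb)) (ge_of_tendsto hl ?_)⟩
  · rintro _ ⟨s, hs, rfl⟩
    rcases hg with (hm | ha) | ⟨c, hc, hm, ha⟩
    · exact min_le_of_right_le (hm.ge_of_tendsto_nhdsGT hl hs)
    · exact min_le_of_left_le (ha hs hb hs.2)
    · rcases le_or_gt s c with hsc | hcs
      · exact min_le_of_right_le (hm.ge_of_tendsto_nhdsGT hl ⟨hs.1, hsc⟩)
      · exact min_le_of_left_le (ha ⟨hcs.le, hs.2⟩ ⟨hc.2.le, le_rfl⟩ hs.2)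
  · filter_upwards [Ioo_mem_nhdsGT hab] with t ht
    exact hm (mem_image_of_mem g (Ioo_subset_Ioc_self ht))

end Unimodal

/-- abstract structure underlying the conclusion of Theorem 1.2.
`g_d(s) = d^s·L(s)` with `g_d'(s) = d^s (ln d · L(s) + L'(s))`; if every interior
critical point of `g_d` is a strict local maximum, then `g_d` is monotone or has
exactly one interior maximum, the limit `L₀ = lim_{s→0⁺} L(s)` exists, and
`inf_{(0,1]} g_d = min (d·L(1)) L₀`, equal to `d·L(1)` for `d ≤ d* = L₀/L(1)`
and to `L₀` for `d ≥ d*`. -/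
theorem stmt_6 (L L' : ℝ → ℝ)
    (hLpos : ∀ s ∈ Set.Ioc (0:ℝ) 1, 0 < L s)
    (hLbdd : ∃ C : ℝ, ∀ s ∈ Set.Ioc (0:ℝ) 1, L s ≤ C)
    (hLcont : ContinuousOn L (Set.Ioc (0:ℝ) 1))
    (hLderiv : ∀ s ∈ Set.Ioo (0:ℝ) 1, HasDerivAt L (L' s) s)
    (hcrit : ∀ d : ℝ, 0 < d → ∀ sb ∈ Set.Ioo (0:ℝ) 1,
      d ^ sb * (Real.log d * L sb + L' sb) = 0 →
      ∃ δ > 0, ∀ s ∈ Set.Ioc (0:ℝ) 1, s ≠ sb → |s - sb| < δ →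
        d ^ s * L s < d ^ sb * L sb) :
    (∀ d : ℝ, 0 < d →
      (∀ s₁ ∈ Set.Ioo (0:ℝ) 1, ∀ s₂ ∈ Set.Ioo (0:ℝ) 1,
        d ^ s₁ * (Real.log d * L s₁ + L' s₁) = 0 →
        d ^ s₂ * (Real.log d * L s₂ + L' s₂) = 0 → s₁ = s₂) ∧
      ((MonotoneOn (fun s => d ^ s * L s) (Set.Ioc (0:ℝ) 1) ∨
          AntitoneOn (fun s => d ^ s * L s) (Set.Ioc (0:ℝ) 1)) ∨
        ∃ sstar ∈ Set.Ioo (0:ℝ) 1,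
          d ^ sstar * (Real.log d * L sstar + L' sstar) = 0 ∧
          MonotoneOn (fun s => d ^ s * L s) (Set.Ioc (0:ℝ) sstar) ∧
          AntitoneOn (fun s => d ^ s * L s) (Set.Icc sstar 1))) ∧
    (∃ L₀ : ℝ,
      Filter.Tendsto L (nhdsWithin 0 (Set.Ioi (0:ℝ))) (nhds L₀) ∧
      ∀ d : ℝ, 0 < d →
        sInf ((fun s => d ^ s * L s) '' Set.Ioc (0:ℝ) 1) = min (d * L 1) L₀ ∧
        (d ≤ L₀ / L 1 →
          sInf ((fun s => d ^ s * L s) '' Set.Ioc (0:ℝ) 1) = d * L 1) ∧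
        (L₀ / L 1 ≤ d →
          sInf ((fun s => d ^ s * L s) '' Set.Ioc (0:ℝ) 1) = L₀)) := by
  have hstruct := fun d (hd : 0 < d) => critical_structure_of_strict_max
    ((Real.continuous_const_rpow hd.ne').continuousOn.mul hLcont)
    (fun s hs => hasDerivAt_const_rpow_mul hd (hLderiv s hs))
    (fun s hs hG => eventually_nhdsNE_of_forall_abs_sub_lt (Ioc_mem_nhds hs.1 hs.2)
      (hcrit d hd s hs hG))
  have hunimodal : ∀ d, 0 < d → IsUnimodalOn (fun s => d ^ s * L s) 0 1 :=
    fun d hd => (hstruct d hd).2.imp_right fun ⟨c, hc, _, hm, ha⟩ => ⟨c, hc, hm, ha⟩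
  refine ⟨hstruct, ?_⟩
  obtain ⟨C, hC⟩ := hLbdd
  obtain ⟨L₀, hL₀⟩ : ∃ L₀, Tendsto L (𝓝[>] 0) (𝓝 L₀) := by
    have hL : IsUnimodalOn L 0 1 := by
      simpa only [Real.one_rpow, one_mul] using hunimodal 1 one_pos
    exact hL.exists_tendsto_nhdsGT one_pos ⟨0, forall_mem_image.2 fun s hs => (hLpos s hs).le⟩
      ⟨C, forall_mem_image.2 hC⟩
  refine ⟨L₀, hL₀, fun d hd => ?_⟩
  have hg₀ : Tendsto (fun s => d ^ s * L s) (𝓝[>] 0) (𝓝 L₀) := by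
    simpa only [one_mul] using ((Real.continuous_const_rpow hd.ne').tendsto' 0 1 (Real.rpow_zero d)
      |>.mono_left nhdsWithin_le_nhds).mul hL₀
  have hinf : sInf ((fun s => d ^ s * L s) '' Ioc 0 1) = min (d * L 1) L₀ := by
    simpa only [Real.rpow_one] using ((hunimodal d hd).isGLB_image one_pos hg₀).csInf_eq
      ((nonempty_Ioc.2 one_pos).image _)
  have hL1 : 0 < L 1 := hLpos 1 (right_mem_Ioc.2 one_pos)
  refine ⟨hinf, fun h => ?_, fun h => ?_⟩
  · rw [hinf, min_eq_left ((le_div_iff₀ hL1).1 h)]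
  · rw [hinf, min_eq_right ((div_le_iff₀ hL1).1 h)]
end

section
/- Intermediate estimate in the proof of Lemma 3.6: assume ∫_Ω m < 0 and m ≥ −M almost everywhere in Ω for some constant M > 0. Let ψ ∈ L²(Ω) satisfy ∫ m ψ = 0 and ∫ m ψ² = −1. Then, denoting by ψ̄ := (1/|Ω|)∫_Ω ψ the average of ψ, one has ∫_Ω (ψ − ψ̄)² ≥ 1/M. -/
/-!
Expanding the square, `∫ m (ψ - c)² = ∫ m ψ² - 2c ∫ m ψ + c² ∫ m ≤ ∫ m ψ²` for every
constant `c`, because `∫ m ψ = 0` and `∫ m ≤ 0`. Since `m ≥ -M`, the left-hand side is at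
least `-M ∫ (ψ - c)²`, so `M ∫ (ψ - c)² ≥ -∫ m ψ² = 1`.
-/

open MeasureTheory

namespace MeasureTheory

variable {α : Type*} [MeasurableSpace α] {μ : Measure α} {m ψ : α → ℝ}

lemma Integrable.mul_of_mul_sq (hm : Integrable m μ)
    (hmψ2 : Integrable (fun x ↦ m x * ψ x ^ 2) μ) (hψ : AEStronglyMeasurable ψ μ) :
    Integrable (fun x ↦ m x * ψ x) μ := by
  refine (hm.norm.add hmψ2.norm).mono' (hm.aestronglyMeasurable.mul hψ) (ae_of_all _ fun x ↦ ?_)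
  have hψ_le : |ψ x| ≤ 1 + ψ x ^ 2 := by nlinarith [sq_abs (ψ x), sq_nonneg (|ψ x| - 1)]
  simp only [Pi.add_apply, Real.norm_eq_abs, abs_mul, abs_pow, sq_abs]
  nlinarith [abs_nonneg (m x)]

lemma integral_mul_sub_const_sq (hm : Integrable m μ)
    (hmψ : Integrable (fun x ↦ m x * ψ x) μ) (hmψ2 : Integrable (fun x ↦ m x * ψ x ^ 2) μ)
    (c : ℝ) :
    ∫ x, m x * (ψ x - c) ^ 2 ∂μ
      = ∫ x, m x * ψ x ^ 2 ∂μ - 2 * c * ∫ x, m x * ψ x ∂μ + c ^ 2 * ∫ x, m x ∂μ := by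
  have hexpand : (fun x ↦ m x * (ψ x - c) ^ 2)
      = fun x ↦ m x * ψ x ^ 2 - 2 * c * (m x * ψ x) + c ^ 2 * m x := by
    ext x; ring
  rw [hexpand, integral_add (f := fun x ↦ m x * ψ x ^ 2 - 2 * c * (m x * ψ x))
      (hmψ2.sub (hmψ.const_mul _)) (hm.const_mul _),
    integral_sub hmψ2 (hmψ.const_mul _), integral_const_mul, integral_const_mul]

lemma neg_integral_mul_sq_le_mul_integral_sub_const_sq [IsFiniteMeasure μ] {M : ℝ}
    (hm : Integrable m μ) (hmψ2 : Integrable (fun x ↦ m x * ψ x ^ 2) μ) (hψ : MemLp ψ 2 μ)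
    (hm_low : ∀ᵐ x ∂μ, -M ≤ m x) (hm_nonpos : ∫ x, m x ∂μ ≤ 0)
    (horth : ∫ x, m x * ψ x ∂μ = 0) (c : ℝ) :
    -∫ x, m x * ψ x ^ 2 ∂μ ≤ M * ∫ x, (ψ x - c) ^ 2 ∂μ := by
  have hsq : Integrable (fun x ↦ (ψ x - c) ^ 2) μ := (hψ.sub (memLp_const c)).integrable_sq
  have hmψ := hm.mul_of_mul_sq hmψ2 hψ.aestronglyMeasurable
  have hmsq : Integrable (fun x ↦ m x * (ψ x - c) ^ 2) μ := by
    refine ((hmψ2.sub (hmψ.const_mul (2 * c))).add (hm.const_mul (c ^ 2))).congr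
      (ae_of_all _ fun x ↦ ?_)
    simp only [Pi.add_apply, Pi.sub_apply]
    ring
  have hlow : -M * ∫ x, (ψ x - c) ^ 2 ∂μ ≤ ∫ x, m x * (ψ x - c) ^ 2 ∂μ := by
    rw [← integral_const_mul]
    refine integral_mono_ae (hsq.const_mul _) hmsq ?_
    filter_upwards [hm_low] with x hx
    exact mul_le_mul_of_nonneg_right hx (sq_nonneg _)
  have hcm : c ^ 2 * ∫ x, m x ∂μ ≤ 0 := mul_nonpos_of_nonneg_of_nonpos (sq_nonneg c) hm_nonpos
  rw [integral_mul_sub_const_sq hm hmψ hmψ2, horth] at hlow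
  linarith

end MeasureTheory

theorem stmt_12_general {N : ℕ} (Ω : Set (Fin N → ℝ))
    (hΩfin : volume Ω < ⊤)
    (μm : Measure (Fin N → ℝ)) (hμm : μm = volume.restrict Ω)
    (m : (Fin N → ℝ) → ℝ)
    (M : ℝ) (hM : 0 < M) (hm_low : ∀ᵐ x ∂μm, -M ≤ m x)
    (hm_neg : ∫ x, m x ∂μm < 0)
    (ψ : (Fin N → ℝ) → ℝ) (hψ : MemLp ψ 2 μm)
    (horth : ∫ x, m x * ψ x ∂μm = 0)
    (hnorm : ∫ x, m x * (ψ x) ^ 2 ∂μm = -1)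
    (ψbar : ℝ) :
    1 / M ≤ ∫ x, (ψ x - ψbar) ^ 2 ∂μm := by
  have : IsFiniteMeasure μm := hμm ▸ isFiniteMeasure_restrict.mpr hΩfin.ne
  -- A nonzero Bochner integral forces integrability.
  have hm : Integrable m μm := .of_integral_ne_zero hm_neg.ne
  have hmψ2 : Integrable (fun x ↦ m x * ψ x ^ 2) μm :=
    .of_integral_ne_zero (by rw [hnorm]; norm_num)
  have key := neg_integral_mul_sq_le_mul_integral_sub_const_sq hm hmψ2 hψ hm_low hm_neg.le
    horth ψbar
  rw [hnorm, neg_neg] at key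
  rwa [div_le_iff₀ hM, mul_comm]

/-- intermediate estimate in the proof of Lemma 3.6: if `∫ m < 0`,
`m ≥ -M` a.e., `∫ m ψ = 0` and `∫ m ψ² = -1`, then the zero-average part of `ψ`
satisfies `∫ (ψ - ψ̄)² ≥ 1/M`. -/
theorem stmt_12 {N : ℕ} (Ω : Set (Fin N → ℝ)) (hΩmeas : MeasurableSet Ω)
    (hΩpos : 0 < volume Ω) (hΩfin : volume Ω < ⊤)
    (μm : Measure (Fin N → ℝ)) (hμm : μm = volume.restrict Ω)
    (m : (Fin N → ℝ) → ℝ) (hm_meas : Measurable m) (hm_bdd : ∃ C : ℝ, ∀ x, |m x| ≤ C)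
    (M : ℝ) (hM : 0 < M) (hm_low : ∀ᵐ x ∂μm, -M ≤ m x)
    (hm_neg : ∫ x, m x ∂μm < 0)
    (ψ : (Fin N → ℝ) → ℝ) (hψ : MemLp ψ 2 μm)
    (horth : ∫ x, m x * ψ x ∂μm = 0)
    (hnorm : ∫ x, m x * (ψ x) ^ 2 ∂μm = -1)
    (ψbar : ℝ) (hψbar : ψbar = (∫ x, ψ x ∂μm) / (volume Ω).toReal) :
    1 / M ≤ ∫ x, (ψ x - ψbar) ^ 2 ∂μm :=
  stmt_12_general Ω hΩfin μm hμm m M hM hm_low hm_neg ψ hψ horth hnorm ψbar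
end

section
/- Test-function lower bound from the proof of Theorem 1.2: assume ∫_Ω m < 0, and let B ⊆ Ω be measurable with m ≥ δ almost everywhere on B, where δ > 0. Let η ∈ L²(Ω) satisfy η ≥ 0 almost everywhere, η = 0 almost everywhere on Ω∖B, and ∫_Ω η² = 1. Set c := −(∫_Ω m η)/(∫_Ω m) and η̂ := η + c. Then ∫_Ω m η̂² ≥ δ + δ²·(∫_Ω η)² / |∫_Ω m|; in particular ∫_Ω m η̂² ≥ δ > 0. -/
/-!
Write `I = ∫ m < 0`, `J = ∫ m η` and `K = ∫ m η²`. Expanding the square, `∫ m (η + c)²` is the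
concave quadratic `K + 2cJ + c²I` in `c`, and `c = -J/I` is its maximiser, with maximum
`K + J²/|I|`. Since `η` vanishes off `B`, where `m ≥ δ`, and `η ≥ 0`, one has `K ≥ δ ∫ η² = δ`
and `J ≥ δ ∫ η ≥ 0`, so `J² ≥ δ² (∫ η)²`.
-/

open MeasureTheory

variable {α : Type*} [MeasurableSpace α] {μ : Measure α}

theorem const_mul_integral_le_integral_mul {δ : ℝ} {m f : α → ℝ} (hf : Integrable f μ)
    (hmf : Integrable (fun x => m x * f x) μ) (hf_nonneg : 0 ≤ᵐ[μ] f)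
    (hm : ∀ᵐ x ∂μ, f x ≠ 0 → δ ≤ m x) :
    δ * ∫ x, f x ∂μ ≤ ∫ x, m x * f x ∂μ := by
  rw [← integral_const_mul]
  refine integral_mono_ae (hf.const_mul δ) hmf ?_
  filter_upwards [hf_nonneg, hm] with x hfx hmx
  rcases eq_or_ne (f x) 0 with hzero | hne
  · simp [hzero]
  · exact mul_le_mul_of_nonneg_right (hmx hne) hfx

theorem integral_mul_add_sq {m η : α → ℝ} (c : ℝ) (hm : Integrable m μ)
    (hmη : Integrable (fun x => m x * η x) μ) (hmη2 : Integrable (fun x => m x * η x ^ 2) μ) :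
    ∫ x, m x * (η x + c) ^ 2 ∂μ =
      ∫ x, m x * η x ^ 2 ∂μ + 2 * c * ∫ x, m x * η x ∂μ + c ^ 2 * ∫ x, m x ∂μ := by
  have hexpand : (fun x => m x * (η x + c) ^ 2) =
      fun x => m x * η x ^ 2 + 2 * c * (m x * η x) + c ^ 2 * m x := by
    funext x; ring
  have hsum : Integrable (fun x => m x * η x ^ 2 + 2 * c * (m x * η x)) μ :=
    hmη2.add (hmη.const_mul _)
  rw [hexpand, integral_add hsum (hm.const_mul _), integral_add hmη2 (hmη.const_mul _),
    integral_const_mul, integral_const_mul]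

theorem quadratic_at_neg_div_eq {I J K : ℝ} (hI : I < 0) :
    K + 2 * (-J / I) * J + (-J / I) ^ 2 * I = K + J ^ 2 / |I| := by
  rw [abs_of_neg hI]
  field_simp
  ring

theorem le_integral_mul_add_sq [IsFiniteMeasure μ] {m η : α → ℝ} {δ C : ℝ}
    (hm_meas : AEStronglyMeasurable m μ) (hm_bdd : ∀ x, |m x| ≤ C)
    (hm_neg : ∫ x, m x ∂μ < 0) (hδ : 0 ≤ δ) (hη : MemLp η 2 μ) (hη_nonneg : 0 ≤ᵐ[μ] η)
    (hm_supp : ∀ᵐ x ∂μ, η x ≠ 0 → δ ≤ m x) (hη_norm : ∫ x, η x ^ 2 ∂μ = 1) :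
    δ + δ ^ 2 * (∫ x, η x ∂μ) ^ 2 / |∫ x, m x ∂μ| ≤
      ∫ x, m x * (η x + -(∫ x, m x * η x ∂μ) / ∫ x, m x ∂μ) ^ 2 ∂μ := by
  have hm_bound : ∀ᵐ x ∂μ, ‖m x‖ ≤ C := ae_of_all _ hm_bdd
  have hη1 : Integrable η μ := hη.integrable one_le_two
  have hη2 : Integrable (fun x => η x ^ 2) μ := hη.integrable_sq
  have hmη : Integrable (fun x => m x * η x) μ := hη1.bdd_mul hm_meas hm_bound
  have hmη2 : Integrable (fun x => m x * η x ^ 2) μ := hη2.bdd_mul hm_meas hm_bound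
  have hJ : δ * ∫ x, η x ∂μ ≤ ∫ x, m x * η x ∂μ :=
    const_mul_integral_le_integral_mul hη1 hmη hη_nonneg hm_supp
  have hK : δ ≤ ∫ x, m x * η x ^ 2 ∂μ := by
    have hsupp2 : ∀ᵐ x ∂μ, η x ^ 2 ≠ 0 → δ ≤ m x := by
      filter_upwards [hm_supp] with x hx h2 using hx (pow_ne_zero_iff two_ne_zero |>.mp h2)
    simpa [hη_norm] using const_mul_integral_le_integral_mul hη2 hmη2
      (ae_of_all _ fun x => sq_nonneg (η x)) hsupp2
  have hJ_sq : δ ^ 2 * (∫ x, η x ∂μ) ^ 2 ≤ (∫ x, m x * η x ∂μ) ^ 2 := by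
    rw [← mul_pow]
    exact pow_le_pow_left₀ (mul_nonneg hδ (integral_nonneg_of_ae hη_nonneg)) hJ 2
  rw [integral_mul_add_sq _ (Integrable.of_bound hm_meas C hm_bound) hmη hmη2,
    quadratic_at_neg_div_eq hm_neg]
  gcongr

theorem stmt_15_general {N : ℕ} (Ω : Set (Fin N → ℝ)) (hΩmeas : MeasurableSet Ω)
    (hΩfin : volume Ω < ⊤)
    (μm : Measure (Fin N → ℝ)) (hμm : μm = volume.restrict Ω)
    (m : (Fin N → ℝ) → ℝ) (hm_meas : Measurable m) (hm_bdd : ∃ C : ℝ, ∀ x, |m x| ≤ C)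
    (hm_neg : ∫ x, m x ∂μm < 0)
    (B : Set (Fin N → ℝ))
    (δ : ℝ) (hδ : 0 < δ) (hmB : ∀ᵐ x ∂μm, x ∈ B → δ ≤ m x)
    (η : (Fin N → ℝ) → ℝ) (hη : MemLp η 2 μm)
    (hηpos : ∀ᵐ x ∂μm, 0 ≤ η x)
    (hηsupp : ∀ᵐ x ∂μm, x ∈ Ω \ B → η x = 0)
    (hηnorm : ∫ x, (η x) ^ 2 ∂μm = 1)
    (c : ℝ) (hc : c = -(∫ x, m x * η x ∂μm) / ∫ x, m x ∂μm) :
    δ + δ ^ 2 * (∫ x, η x ∂μm) ^ 2 / |∫ x, m x ∂μm| ≤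
        ∫ x, m x * (η x + c) ^ 2 ∂μm ∧
      δ ≤ ∫ x, m x * (η x + c) ^ 2 ∂μm := by
  subst hμm hc
  have : IsFiniteMeasure (volume.restrict Ω) := isFiniteMeasure_restrict.mpr hΩfin.ne
  obtain ⟨C, hC⟩ := hm_bdd
  have hm_supp : ∀ᵐ x ∂volume.restrict Ω, η x ≠ 0 → δ ≤ m x := by
    filter_upwards [hmB, hηsupp, ae_restrict_mem hΩmeas] with x hxB hx_off hxΩ hηx
    exact hxB (by_contra fun hx => hηx (hx_off ⟨hxΩ, hx⟩))
  have hbound := le_integral_mul_add_sq hm_meas.aestronglyMeasurable hC hm_neg hδ.le hη hηpos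
    hm_supp hηnorm
  exact ⟨hbound, le_trans (le_add_of_nonneg_right (by positivity)) hbound⟩

/-- test-function lower bound from the proof of Theorem 1.2: with
`m ≥ δ` a.e. on `B`, `η ≥ 0` normalized in `L²` and supported in `B`, and
`η̂ = η + c` with `c = -(∫ m η)/(∫ m)`, one has
`∫ m η̂² ≥ δ + δ²(∫ η)²/|∫ m| ≥ δ > 0`. -/
theorem stmt_15 {N : ℕ} (Ω : Set (Fin N → ℝ)) (hΩmeas : MeasurableSet Ω)
    (hΩpos : 0 < volume Ω) (hΩfin : volume Ω < ⊤)
    (μm : Measure (Fin N → ℝ)) (hμm : μm = volume.restrict Ω)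
    (m : (Fin N → ℝ) → ℝ) (hm_meas : Measurable m) (hm_bdd : ∃ C : ℝ, ∀ x, |m x| ≤ C)
    (hm_neg : ∫ x, m x ∂μm < 0)
    (B : Set (Fin N → ℝ)) (hBmeas : MeasurableSet B) (hBΩ : B ⊆ Ω)
    (δ : ℝ) (hδ : 0 < δ) (hmB : ∀ᵐ x ∂μm, x ∈ B → δ ≤ m x)
    (η : (Fin N → ℝ) → ℝ) (hη : MemLp η 2 μm)
    (hηpos : ∀ᵐ x ∂μm, 0 ≤ η x)
    (hηsupp : ∀ᵐ x ∂μm, x ∈ Ω \ B → η x = 0)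
    (hηnorm : ∫ x, (η x) ^ 2 ∂μm = 1)
    (c : ℝ) (hc : c = -(∫ x, m x * η x ∂μm) / ∫ x, m x ∂μm) :
    δ + δ ^ 2 * (∫ x, η x ∂μm) ^ 2 / |∫ x, m x ∂μm| ≤
        ∫ x, m x * (η x + c) ^ 2 ∂μm ∧
      δ ≤ ∫ x, m x * (η x + c) ^ 2 ∂μm :=
  stmt_15_general Ω hΩmeas hΩfin μm hμm m hm_meas hm_bdd hm_neg B δ hδ hmB η hη hηpos hηsupp hηnorm
    c hc
end
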